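/- Let μ be a stationary distribution of a PIN model on a graph with n nodes and let V : ℝ^𝒜 → ℝ be twice continuously differentiable. Then |Σ_{x∈𝒳} μ_x ∇V(θ(x))·D(x)| ≤ K/n, where K = max_{θ∈P(𝒜)} ‖∇²V(θ)‖₂ is the maximum over the probability simplex of the operator 2-norm of the Hessian of V (in particular K depends only on V). -/

import Mathlib

open Finset Filter

noncomputable section

/-- The empirical type (state frequencies) of a configuration. -/
def confType {V A : Type*} [Fintype V] [DecidableEq A] (x : V → A) (i : A) : ℝ :=
  ((Finset.univ.filter fun v => x v = i).card : ℝ) / (Fintype.card V : ℝ)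

/-- The boundary (empirical link-pair frequencies) of a configuration. -/
def boundary {V A : Type*} [DecidableEq A] (E : Finset (V × V)) (x : V → A) (i j : A) : ℝ :=
  ((E.filter fun e => x e.1 = i ∧ x e.2 = j).card : ℝ) / (E.card : ℝ)

/-- Off-diagonal part of the PIN transition matrix. -/
def Toff {V A : Type*} [Fintype V] [DecidableEq V] [DecidableEq A]
    (E : Finset (V × V)) (ρ : ℝ) (P : A → A → ℝ) (φ : A → A → A → ℝ) (x y : V → A) : ℝ :=
  if (Finset.univ.filter fun v => x v ≠ y v).card = 1 then
    ∑ u ∈ Finset.univ.filter fun v => x v ≠ y v,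
      ((1 - ρ) * (1 / (Fintype.card V : ℝ)) * P (x u) (y u)
        + (ρ / (E.card : ℝ)) * ∑ e ∈ E.filter fun e => e.1 = u, φ (x u) (y u) (x e.2))
  else 0

/-- The PIN transition matrix. -/
def pinTrans {V A : Type*} [Fintype V] [DecidableEq V] [Fintype A] [DecidableEq A]
    (E : Finset (V × V)) (ρ : ℝ) (P : A → A → ℝ) (φ : A → A → A → ℝ) (x y : V → A) : ℝ :=
  if x = y then 1 - ∑ z : V → A, Toff E ρ P φ x z else Toff E ρ P φ x y

/-- The mean drift of the PIN model. -/
def meanDrift {V A : Type*} [Fintype V] [DecidableEq V] [Fintype A] [DecidableEq A]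
    (E : Finset (V × V)) (ρ : ℝ) (P : A → A → ℝ) (φ : A → A → A → ℝ) (x : V → A) (i : A) : ℝ :=
  (Fintype.card V : ℝ) * ∑ y : V → A, pinTrans E ρ P φ x y * (confType y i - confType x i)

/-- The limit drift of the PIN model. -/
def limitDrift {A : Type*} [Fintype A] (ρ : ℝ) (P : A → A → ℝ) (φ : A → A → A → ℝ)
    (θ : A → ℝ) (i : A) : ℝ :=
  ((1 - ρ) * ∑ j, P j i * θ j) + (ρ * ∑ ℓ, θ ℓ * ∑ j, φ j i ℓ * θ j) - θ i

/-- The linear operator Q acting on boundaries. -/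
def Qop {A : Type*} [Fintype A] (φ : A → A → A → ℝ) (ξ : A → A → ℝ) (i : A) : ℝ :=
  (∑ ℓ, ∑ j, ξ j ℓ * φ j i ℓ) - ∑ ℓ, ξ i ℓ

/-- Membership in the probability simplex over `A`. -/
def inSimplex {A : Type*} [Fintype A] (θ : A → ℝ) : Prop :=
  (∀ i, 0 ≤ θ i) ∧ ∑ i, θ i = 1

/-- The hypotheses on the parameters of a PIN model: `ρ ∈ [0,1]`, `P` and each `φ(ℓ)`
row-stochastic and nonnegative, the interaction graph nonempty and without self-loops. -/
def IsPinModel {V A : Type*} [Fintype A] (E : Finset (V × V)) (ρ : ℝ)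
    (P : A → A → ℝ) (φ : A → A → A → ℝ) : Prop :=
  0 ≤ ρ ∧ ρ ≤ 1 ∧ (∀ i j, 0 ≤ P i j) ∧ (∀ i, ∑ j, P i j = 1) ∧
    (∀ i j ℓ, 0 ≤ φ i j ℓ) ∧ (∀ i ℓ, ∑ j, φ i j ℓ = 1) ∧
    E.Nonempty ∧ ∀ e ∈ E, e.1 ≠ e.2

/-- Stationary distribution of a PIN model. -/
def IsPinStationary {V A : Type*} [Fintype V] [DecidableEq V] [Fintype A] [DecidableEq A]
    (E : Finset (V × V)) (ρ : ℝ) (P : A → A → ℝ) (φ : A → A → A → ℝ)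
    (μ : (V → A) → ℝ) : Prop :=
  (∀ x, 0 ≤ μ x) ∧ (∑ x : V → A, μ x = 1) ∧
    ∀ y : V → A, ∑ x : V → A, μ x * pinTrans E ρ P φ x y = μ y

/-- The total mixing gap of a graph. -/
def mixingGap {V : Type*} [Fintype V] [DecidableEq V] (E : Finset (V × V)) : ℝ :=
  sSup {w : ℝ | ∃ S U : Finset V, Disjoint S U ∧
    w = |((E.filter fun e => e.1 ∈ S ∧ e.2 ∈ U).card : ℝ) / (E.card : ℝ) -
      ((S.card : ℝ) * (U.card : ℝ)) / ((Fintype.card V : ℝ) * ((Fintype.card V : ℝ) - 1))|}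

open Classical in
/-- Total `μ`-mass of the set of configurations satisfying `p`. -/
def massOf {X : Type*} [Fintype X] (μ : X → ℝ) (p : X → Prop) : ℝ :=
  ∑ x, if p x then μ x else 0

/-- The Hessian matrix of `W : ℝ^A → ℝ` at `θ`. -/
def hessMat {A : Type*} [Fintype A] [DecidableEq A] (W : (A → ℝ) → ℝ) (θ : A → ℝ) :
    Matrix A A ℝ :=
  fun i j => iteratedFDeriv ℝ 2 W θ ![Pi.single i 1, Pi.single j 1]

/-- The operator 2-norm of the Hessian of `W` at `θ`. -/
def hessOpNorm2 {A : Type*} [Fintype A] [DecidableEq A] (W : (A → ℝ) → ℝ) (θ : A → ℝ) : ℝ :=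
  ‖Matrix.toEuclideanCLM (𝕜 := ℝ) (hessMat W θ)‖

/-!
Stationarity of `μ` makes the expected one-step increment of any function of the configuration
vanish, while `n` times the expected linearised increment `∇V(θ(X))·(θ(Y) - θ(X))` is exactly
`∇V(θ(X))·D(X)`. Hence the quantity to bound is `-n` times the expected second-order Taylor
remainder of `V ∘ θ` along one step of the chain. A step changes the state of a single node, so
`‖θ(Y) - θ(X)‖₂² = 2/n²`; the segment from `θ(X)` to `θ(Y)` stays in the simplex, where the Hessian
has operator norm at most `K`, so the remainder is at most `K/n²` and the bound is `K/n`.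
-/

theorem abs_sub_sub_fderiv_le_of_segment {E : Type*} [NormedAddCommGroup E] [NormedSpace ℝ E]
    {W : E → ℝ} (hW : ContDiff ℝ 2 W) {x y : E} {C : ℝ}
    (hC : ∀ z ∈ segment ℝ x y, |fderiv ℝ (fderiv ℝ W) z (y - x) (y - x)| ≤ C) :
    |W y - W x - fderiv ℝ W x (y - x)| ≤ C / 2 := by
  set d := y - x
  set L : ℝ → E := fun t => x + t • d
  have hL : ∀ t, HasDerivAt L d t := fun t =>
    (((hasDerivAt_id t).smul_const d).const_add x).congr_deriv (one_smul ℝ d)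
  set g' : ℝ → ℝ := fun t => fderiv ℝ W (L t) d
  have hg : ∀ t, HasDerivAt (fun t => W (L t)) (g' t) t := fun t =>
    ((hW.differentiable (by norm_num)) (L t)).hasFDerivAt.comp_hasDerivAt t (hL t)
  have hW' : Differentiable ℝ (fderiv ℝ W) :=
    (hW.fderiv_right (m := 1) (by norm_num)).differentiable (by norm_num)
  have hg' : ∀ t, HasDerivAt g' (fderiv ℝ (fderiv ℝ W) (L t) d d) t := fun t =>
    ((hW' (L t)).hasFDerivAt.comp_hasDerivAt t (hL t)).clm_apply (hasDerivAt_const t d)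
      |>.congr_deriv (by simp)
  have hL_mem : ∀ t ∈ Set.Icc (0 : ℝ) 1, L t ∈ segment ℝ x y := fun t ht => by
    rw [segment_eq_image']; exact ⟨t, ht, rfl⟩
  have hg'_sub : ∀ t ∈ Set.Icc (0 : ℝ) 1, ‖g' t - g' 0‖ ≤ C * t := fun t ht => by
    simpa using norm_image_sub_le_of_norm_deriv_right_le_segment
      (fun s _ => (hg' s).continuousAt.continuousWithinAt) (fun s _ => (hg' s).hasDerivWithinAt)
      (fun s hs => hC _ (hL_mem s (Set.Ico_subset_Icc_self hs))) t ht
  have hf : ∀ t, HasDerivAt (fun t => W (L t) - W x - t * g' 0) (g' t - g' 0) t := fun t =>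
    ((hg t).sub_const (W x)).sub (hasDerivAt_mul_const (g' 0))
  have hB : ∀ t, HasDerivAt (fun t => C * t ^ 2 / 2) (C * t) t := fun t =>
    ((hasDerivAt_pow 2 t).const_mul C).div_const 2 |>.congr_deriv (by ring)
  -- Fence `t ↦ W (x + t • d) - W x - t * g' 0` by the barrier `C * t ^ 2 / 2`.
  simpa [L, d, g'] using image_norm_le_of_norm_deriv_right_le_deriv_boundary
    (fun t _ => (hf t).continuousAt.continuousWithinAt) (fun t _ => (hf t).hasDerivWithinAt)
    (by simp [L]) hB (fun t ht => hg'_sub t (Set.Ico_subset_Icc_self ht))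
    (Set.right_mem_Icc.2 zero_le_one)

open Matrix in
theorem fderiv_fderiv_apply_eq_dotProduct_hessMat {A : Type*} [Fintype A] [DecidableEq A]
    (W : (A → ℝ) → ℝ) (z d : A → ℝ) :
    fderiv ℝ (fderiv ℝ W) z d d = d ⬝ᵥ (hessMat W z *ᵥ d) := by
  have hd : d = ∑ i, d i • Pi.single i (1 : ℝ) := by ext j; simp [Pi.single_apply]
  conv_lhs => rw [hd]
  simp only [map_sum, map_smul, dotProduct, mulVec, hessMat, iteratedFDeriv_two_apply]
  simp only [_root_.sum_apply, _root_.smul_apply, smul_eq_mul, mul_sum, cons_val_zero,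
    cons_val_one, cons_val_fin_one]
  rw [sum_comm]
  exact sum_congr rfl fun _ _ => sum_congr rfl fun _ _ => by ring

open Matrix in
theorem abs_dotProduct_mulVec_le {A : Type*} [Fintype A] [DecidableEq A] (M : Matrix A A ℝ)
    (d : A → ℝ) :
    |d ⬝ᵥ (M *ᵥ d)| ≤ ‖toEuclideanCLM (𝕜 := ℝ) M‖ * ∑ i, d i ^ 2 := by
  set v := WithLp.toLp 2 d
  have hv : ‖v‖ ^ 2 = ∑ i, d i ^ 2 := by simp [v, EuclideanSpace.real_norm_sq_eq]
  calc |d ⬝ᵥ (M *ᵥ d)| = |inner ℝ v (toEuclideanCLM (𝕜 := ℝ) M v)| := by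
        rw [inner_toEuclideanCLM]
    _ ≤ ‖v‖ * (‖toEuclideanCLM (𝕜 := ℝ) M‖ * ‖v‖) :=
        (abs_real_inner_le_norm _ _).trans
          (by gcongr; exact (toEuclideanCLM (𝕜 := ℝ) M).le_opNorm v)
    _ = ‖toEuclideanCLM (𝕜 := ℝ) M‖ * ∑ i, d i ^ 2 := by rw [← hv]; ring

def hessBound {A : Type*} [Fintype A] [DecidableEq A] (W : (A → ℝ) → ℝ) : ℝ :=
  sSup {k : ℝ | ∃ θ : A → ℝ, inSimplex θ ∧ k = hessOpNorm2 W θ}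

theorem continuous_hessOpNorm2 {A : Type*} [Fintype A] [DecidableEq A] {W : (A → ℝ) → ℝ}
    (hW : ContDiff ℝ 2 W) : Continuous (hessOpNorm2 W) := by
  have hH : Continuous (hessMat W) := continuous_pi fun i => continuous_pi fun j =>
    (ContinuousMultilinearMap.apply ℝ (fun _ : Fin 2 => A → ℝ) ℝ
      ![Pi.single i 1, Pi.single j 1]).continuous.comp (hW.continuous_iteratedFDeriv le_rfl)
  exact continuous_norm.comp <| (Matrix.toEuclideanCLM (𝕜 := ℝ) (n := A)).toAlgEquiv.toLinearMap
    |>.continuous_of_finiteDimensional.comp hH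

theorem hessOpNorm2_le_hessBound {A : Type*} [Fintype A] [DecidableEq A] {W : (A → ℝ) → ℝ}
    (hW : ContDiff ℝ 2 W) {θ : A → ℝ} (hθ : θ ∈ stdSimplex ℝ A) :
    hessOpNorm2 W θ ≤ hessBound W :=
  le_csSup (((isCompact_stdSimplex ℝ A).bddAbove_image
    (continuous_hessOpNorm2 hW).continuousOn).mono (by rintro _ ⟨θ, hθ, rfl⟩; exact ⟨θ, hθ, rfl⟩))
    ⟨θ, hθ, rfl⟩

section StationaryChain

variable {X : Type*} [Fintype X] {T : X → X → ℝ} {μ : X → ℝ}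

theorem sum_stationary_mul_sum_sub_eq_zero (hT : ∀ x, ∑ y, T x y = 1)
    (hμ : ∀ y, ∑ x, μ x * T x y = μ y) (f : X → ℝ) :
    ∑ x, μ x * ∑ y, T x y * (f y - f x) = 0 := by
  have hflow : ∑ x, μ x * ∑ y, T x y * f y = ∑ y, μ y * f y := by
    simp_rw [mul_sum, ← mul_assoc]
    rw [sum_comm]
    simp_rw [← sum_mul, hμ]
  simp_rw [mul_sub, sum_sub_distrib, ← sum_mul, hT, one_mul, mul_sub, sum_sub_distrib, hflow,
    sub_self]

theorem sum_stationary_mul_sum_eq_neg (hT : ∀ x, ∑ y, T x y = 1)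
    (hμ : ∀ y, ∑ x, μ x * T x y = μ y) (f : X → ℝ) (g : X → X → ℝ) :
    ∑ x, μ x * ∑ y, T x y * g x y = -∑ x, μ x * ∑ y, T x y * (f y - f x - g x y) := by
  have h := sum_stationary_mul_sum_sub_eq_zero hT hμ f
  simp only [mul_sub, sum_sub_distrib] at h ⊢
  linarith

theorem abs_sum_mul_sum_le (hμ0 : ∀ x, 0 ≤ μ x) (hμ1 : ∑ x, μ x = 1) (hT0 : ∀ x y, 0 ≤ T x y)
    (hT1 : ∀ x, ∑ y, T x y = 1) {g : X → X → ℝ} {B : ℝ}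
    (hg : ∀ x y, T x y ≠ 0 → |g x y| ≤ B) :
    |∑ x, μ x * ∑ y, T x y * g x y| ≤ B := by
  have hrow : ∀ x, |∑ y, T x y * g x y| ≤ B := fun x =>
    calc |∑ y, T x y * g x y| ≤ ∑ y, T x y * |g x y| :=
          (abs_sum_le_sum_abs _ _).trans_eq (by simp [abs_mul, abs_of_nonneg (hT0 x _)])
      _ ≤ ∑ y, T x y * B := sum_le_sum fun y _ => by
          rcases eq_or_ne (T x y) 0 with h | h
          · simp [h]
          · exact mul_le_mul_of_nonneg_left (hg x y h) (hT0 x y)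
      _ = B := by rw [← sum_mul, hT1, one_mul]
  calc |∑ x, μ x * ∑ y, T x y * g x y| ≤ ∑ x, μ x * |∑ y, T x y * g x y| :=
        (abs_sum_le_sum_abs _ _).trans_eq (by simp [abs_mul, abs_of_nonneg (hμ0 _)])
    _ ≤ ∑ x, μ x * B := sum_le_sum fun x _ => mul_le_mul_of_nonneg_left (hrow x) (hμ0 x)
    _ = B := by rw [← sum_mul, hμ1, one_mul]

end StationaryChain

section PinTransition

variable {V A : Type*} [Fintype V] [DecidableEq V]

def siteRate (E : Finset (V × V)) (ρ : ℝ) (P : A → A → ℝ) (φ : A → A → A → ℝ) (x : V → A)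
    (u : V) (b : A) : ℝ :=
  (1 - ρ) * (1 / (Fintype.card V : ℝ)) * P (x u) b
    + (ρ / (E.card : ℝ)) * ∑ e ∈ E.filter fun e => e.1 = u, φ (x u) b (x e.2)

variable {E : Finset (V × V)} {ρ : ℝ} {P : A → A → ℝ} {φ : A → A → A → ℝ}

section

variable [DecidableEq A]

theorem Toff_eq_sum_ite (x z : V → A) :
    Toff E ρ P φ x z = ∑ u, if univ.filter (fun v => x v ≠ z v) = {u}
      then siteRate E ρ P φ x u (z u) else 0 := by
  unfold Toff
  split_ifs with h
  · obtain ⟨u, hu⟩ := card_eq_one.1 h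
    simp [hu, siteRate]
  · exact (sum_eq_zero fun u _ => if_neg fun hu => h (by rw [hu, card_singleton])).symm

theorem Toff_self (x : V → A) : Toff E ρ P φ x x = 0 := by
  simp [Toff]

theorem eq_update_of_filter_ne_eq_singleton {x z : V → A} {u : V}
    (h : univ.filter (fun v => x v ≠ z v) = {u}) : z u ≠ x u ∧ z = Function.update x u (z u) := by
  have hmem : ∀ v, x v ≠ z v ↔ v = u := fun v => by simpa using congrArg (v ∈ ·) h
  refine ⟨fun hu => (hmem u).2 rfl hu.symm, funext fun v => ?_⟩
  by_cases hv : v = u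
  · subst hv; simp
  · rw [Function.update_of_ne hv]; exact not_not.1 (mt (hmem v).1 hv) |>.symm

end

variable [Fintype A]

theorem siteRate_nonneg (hmodel : IsPinModel E ρ P φ) (x : V → A) (u : V) (b : A) :
    0 ≤ siteRate E ρ P φ x u b := by
  obtain ⟨hρ0, hρ1, hP0, -, hφ0, -⟩ := hmodel
  exact add_nonneg (mul_nonneg (mul_nonneg (sub_nonneg.2 hρ1) (by positivity)) (hP0 _ _))
    (mul_nonneg (div_nonneg hρ0 (Nat.cast_nonneg _)) (sum_nonneg fun e _ => hφ0 _ _ _))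

theorem sum_siteRate_le_one (hmodel : IsPinModel E ρ P φ) (x : V → A) :
    ∑ u, ∑ b, siteRate E ρ P φ x u b ≤ 1 := by
  obtain ⟨hρ0, hρ1, -, hP1, -, hφ1, -⟩ := hmodel
  have hφ : ∀ u, ∑ b, ∑ e ∈ E.filter fun e => e.1 = u, φ (x u) b (x e.2) =
      ((E.filter fun e => e.1 = u).card : ℝ) := fun u => by
    rw [sum_comm]; simp [hφ1]
  have hdeg : ∑ u, ((E.filter fun e => e.1 = u).card : ℝ) = E.card := by
    simpa using congrArg (Nat.cast (R := ℝ)) (sum_fiberwise E Prod.fst fun _ => 1)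
  simp only [siteRate, sum_add_distrib, ← mul_sum, hP1, hφ, hdeg, sum_const, card_univ,
    nsmul_eq_mul]
  calc _ = (1 - ρ) * ((Fintype.card V : ℝ) / Fintype.card V) + ρ * ((E.card : ℝ) / E.card) := by
        ring
    _ ≤ (1 - ρ) * 1 + ρ * 1 := by gcongr <;> first | linarith | exact div_self_le_one _
    _ = 1 := by ring

variable [DecidableEq A]

theorem Toff_nonneg (hmodel : IsPinModel E ρ P φ) (x z : V → A) : 0 ≤ Toff E ρ P φ x z := by
  rw [Toff_eq_sum_ite]
  exact sum_nonneg fun u _ => by split_ifs <;> simp [siteRate_nonneg hmodel]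

theorem sum_ite_filter_ne_eq_singleton_le (hmodel : IsPinModel E ρ P φ) (x : V → A) (u : V) :
    ∑ z : V → A, (if univ.filter (fun v => x v ≠ z v) = {u}
      then siteRate E ρ P φ x u (z u) else 0) ≤ ∑ b, siteRate E ρ P φ x u b := by
  rw [← sum_filter, ← sum_image (g := fun z : V → A => z u)]
  · exact sum_le_univ_sum_of_nonneg (siteRate_nonneg hmodel x u)
  · intro z hz z' hz' hzz'
    simp only [coe_filter, mem_univ, true_and, Set.mem_ofPred_eq] at hz hz'
    rw [(eq_update_of_filter_ne_eq_singleton hz).2, (eq_update_of_filter_ne_eq_singleton hz').2]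
    exact congrArg _ hzz'

theorem sum_Toff_le_one (hmodel : IsPinModel E ρ P φ) (x : V → A) :
    ∑ z, Toff E ρ P φ x z ≤ 1 :=
  calc ∑ z, Toff E ρ P φ x z
      = ∑ u, ∑ z : V → A, if univ.filter (fun v => x v ≠ z v) = {u}
          then siteRate E ρ P φ x u (z u) else 0 := by
        simp_rw [Toff_eq_sum_ite]; exact sum_comm
    _ ≤ ∑ u, ∑ b, siteRate E ρ P φ x u b :=
        sum_le_sum fun u _ => sum_ite_filter_ne_eq_singleton_le hmodel x u
    _ ≤ 1 := sum_siteRate_le_one hmodel x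

theorem pinTrans_nonneg (hmodel : IsPinModel E ρ P φ) (x y : V → A) :
    0 ≤ pinTrans E ρ P φ x y := by
  unfold pinTrans
  split_ifs
  · linarith [sum_Toff_le_one hmodel x]
  · exact Toff_nonneg hmodel x y

theorem sum_pinTrans (x : V → A) : ∑ y, pinTrans E ρ P φ x y = 1 := by
  rw [← add_sum_erase _ _ (mem_univ x), pinTrans, if_pos rfl,
    ← add_sum_erase _ (Toff E ρ P φ x) (mem_univ x), Toff_self]
  have hoff : ∀ y ∈ univ.erase x, pinTrans E ρ P φ x y = Toff E ρ P φ x y :=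
    fun y hy => if_neg (ne_of_mem_erase hy).symm
  rw [sum_congr rfl hoff]
  ring

theorem exists_eq_update_of_pinTrans_ne_zero {x y : V → A} (hxy : x ≠ y)
    (h : pinTrans E ρ P φ x y ≠ 0) : ∃ u b, b ≠ x u ∧ y = Function.update x u b := by
  rw [pinTrans, if_neg hxy, Toff_eq_sum_ite] at h
  obtain ⟨u, -, hu⟩ := exists_ne_zero_of_sum_ne_zero h
  exact ⟨u, y u, eq_update_of_filter_ne_eq_singleton (by by_contra h'; exact hu (if_neg h'))⟩

end PinTransition

section ConfType

variable {V A : Type*} [Fintype V] [DecidableEq A]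

theorem confType_mem_stdSimplex [Fintype A] (hV : 0 < Fintype.card V) (x : V → A) :
    confType x ∈ stdSimplex ℝ A := by
  refine ⟨fun i => by unfold confType; positivity, ?_⟩
  have hcard : ∑ i : A, ((univ.filter fun v => x v = i).card : ℝ) = Fintype.card V := by
    exact_mod_cast (card_eq_sum_card_fiberwise fun v _ => mem_univ (x v)).symm
  simp only [confType]
  rw [← sum_div, hcard, div_self (by positivity)]

theorem confType_update_sub_apply [DecidableEq V] (x : V → A) (u : V) (b i : A) :
    confType (Function.update x u b) i - confType x i
      = ((if b = i then 1 else 0) - (if x u = i then 1 else 0)) / (Fintype.card V : ℝ) := by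
  simp only [confType, natCast_card_filter, ← sub_div, ← sum_sub_distrib]
  rw [sum_eq_single_of_mem u (mem_univ u)
    fun v _ hv => by rw [Function.update_of_ne hv, sub_self], Function.update_self]

theorem sum_sq_confType_update_sub [Fintype A] [DecidableEq V] {x : V → A} {u : V} {b : A}
    (hb : b ≠ x u) :
    ∑ i, (confType (Function.update x u b) i - confType x i) ^ 2
      = 2 / (Fintype.card V : ℝ) ^ 2 := by
  have hsq : ∀ i, ((if b = i then (1 : ℝ) else 0) - (if x u = i then 1 else 0)) ^ 2
      = (if b = i then 1 else 0) + (if x u = i then 1 else 0) := fun i => by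
    by_cases hbi : b = i <;> by_cases hxi : x u = i
    · exact absurd (hbi.trans hxi.symm) hb
    all_goals simp [hbi, hxi]
  simp only [confType_update_sub_apply, div_pow, hsq, ← sum_div, sum_add_distrib, sum_ite_eq,
    mem_univ, if_true]
  norm_num

end ConfType

theorem map_meanDrift {V A F : Type*} [Fintype V] [DecidableEq V] [Fintype A] [DecidableEq A]
    [FunLike F (A → ℝ) ℝ] [LinearMapClass F ℝ (A → ℝ) ℝ] (ℓ : F)
    (E : Finset (V × V)) (ρ : ℝ) (P : A → A → ℝ) (φ : A → A → A → ℝ) (x : V → A) :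
    ℓ (meanDrift E ρ P φ x)
      = Fintype.card V * ∑ y, pinTrans E ρ P φ x y * ℓ (confType y - confType x) := by
  have h : meanDrift E ρ P φ x
      = (Fintype.card V : ℝ) • ∑ y, pinTrans E ρ P φ x y • (confType y - confType x) := by
    ext i; simp [meanDrift, Finset.sum_apply]
  simp [h, map_sum, map_smul]

open Matrix in
theorem abs_remainder_le_of_pinTrans_ne_zero {V A : Type*} [Fintype V] [DecidableEq V]
    [Fintype A] [DecidableEq A] {E : Finset (V × V)} {ρ : ℝ} {P : A → A → ℝ}
    {φ : A → A → A → ℝ} {W : (A → ℝ) → ℝ} (hW : ContDiff ℝ 2 W) (hV : 0 < Fintype.card V)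
    {x y : V → A} (hxy : pinTrans E ρ P φ x y ≠ 0) :
    |W (confType y) - W (confType x) - fderiv ℝ W (confType x) (confType y - confType x)|
      ≤ hessBound W / (Fintype.card V : ℝ) ^ 2 := by
  have hθ := confType_mem_stdSimplex (A := A) hV
  rcases eq_or_ne x y with rfl | hne
  · simpa using div_nonneg ((norm_nonneg _).trans (hessOpNorm2_le_hessBound hW (hθ x)))
      (sq_nonneg (Fintype.card V : ℝ))
  obtain ⟨u, b, hb, rfl⟩ := exists_eq_update_of_pinTrans_ne_zero hne hxy
  set d := confType (Function.update x u b) - confType x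
  have hd : ∑ i, d i ^ 2 = 2 / (Fintype.card V : ℝ) ^ 2 := sum_sq_confType_update_sub hb
  calc _ ≤ hessBound W * (2 / (Fintype.card V : ℝ) ^ 2) / 2 :=
        abs_sub_sub_fderiv_le_of_segment hW fun z hz => ?_
    _ = hessBound W / (Fintype.card V : ℝ) ^ 2 := by ring
  calc |fderiv ℝ (fderiv ℝ W) z d d| = |d ⬝ᵥ (hessMat W z *ᵥ d)| := by
        rw [fderiv_fderiv_apply_eq_dotProduct_hessMat]
    _ ≤ hessOpNorm2 W z * ∑ i, d i ^ 2 := abs_dotProduct_mulVec_le _ _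
    _ ≤ hessBound W * (2 / (Fintype.card V : ℝ) ^ 2) := by
        rw [hd]
        gcongr
        exact hessOpNorm2_le_hessBound hW
          ((convex_stdSimplex ℝ A).segment_subset (hθ x) (hθ _) hz)

theorem abs_expectation_gradDot_meanDrift_le_general {V A : Type*} [Fintype V] [DecidableEq V]
    [Fintype A] [DecidableEq A]
    (E : Finset (V × V)) (ρ : ℝ) (P : A → A → ℝ) (φ : A → A → A → ℝ)
    (hmodel : IsPinModel E ρ P φ)
    (μ : (V → A) → ℝ) (hμ : IsPinStationary E ρ P φ μ)
    (W : (A → ℝ) → ℝ) (hW : ContDiff ℝ 2 W) :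
    |∑ x : V → A, μ x * fderiv ℝ W (confType x) (meanDrift E ρ P φ x)| ≤
      sSup {k : ℝ | ∃ θ : A → ℝ, inSimplex θ ∧ k = hessOpNorm2 W θ} /
        (Fintype.card V : ℝ) := by
  obtain ⟨hμ0, hμ1, hμT⟩ := hμ
  simp_rw [map_meanDrift, mul_left_comm (μ _), ← mul_sum]
  rw [sum_stationary_mul_sum_eq_neg sum_pinTrans hμT (fun x => W (confType x)), abs_mul,
    abs_neg, Nat.abs_cast]
  rcases (Fintype.card V).eq_zero_or_pos with hV | hV
  · simp [hV]
  calc _ ≤ (Fintype.card V : ℝ) * (hessBound W / (Fintype.card V : ℝ) ^ 2) := by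
        gcongr
        exact abs_sum_mul_sum_le hμ0 hμ1 (pinTrans_nonneg hmodel) sum_pinTrans
          fun x y h => abs_remainder_le_of_pinTrans_ne_zero hW hV h
    _ = hessBound W / Fintype.card V := by field_simp

/-- Lemma: stationarity bound.
If `μ` is a stationary distribution of a PIN model and `V` is of class `C²`, then
`|E_μ[∇V(θ(X))·D(X)]| ≤ K/n` where `K = max_{θ ∈ P(𝒜)} ‖∇²V(θ)‖₂`. -/
theorem abs_expectation_gradDot_meanDrift_le {V A : Type*} [Fintype V] [DecidableEq V]
    [Fintype A] [DecidableEq A] [Nonempty A]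
    (E : Finset (V × V)) (ρ : ℝ) (P : A → A → ℝ) (φ : A → A → A → ℝ)
    (hmodel : IsPinModel E ρ P φ)
    (μ : (V → A) → ℝ) (hμ : IsPinStationary E ρ P φ μ)
    (W : (A → ℝ) → ℝ) (hW : ContDiff ℝ 2 W) :
    |∑ x : V → A, μ x * fderiv ℝ W (confType x) (meanDrift E ρ P φ x)| ≤
      sSup {k : ℝ | ∃ θ : A → ℝ, inSimplex θ ∧ k = hessOpNorm2 W θ} /
        (Fintype.card V : ℝ) :=
  abs_expectation_gradDot_meanDrift_le_general E ρ P φ hmodel μ hμ W hW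

end
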